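/- arXiv:2006.16847 — 2 statements merged into one kernel-verified Lean document; each statement's English description precedes it below -/
import Mathlib

section
/- Hoeffding's theorem: Let p(z) = Σ_{k=0}^d p_k z^k be a real-rooted polynomial with p_k ≥ 0 and p(1) = 1, and define s by Σ_{k=0}^d k·p_k = d·s. If b and c are non-negative integers with b ≤ ds ≤ c, then Σ_{k=b}^c p_k ≥ Σ_{k=b}^c C(d,k) s^k (1-s)^{d-k}. -/
/-!
The roots of `p` are real and, the coefficients being nonnegative, `≤ 0`. Hence
`p = ∏ᵢ (1 - qᵢ + qᵢ z)` with `qᵢ ∈ [0, 1]` and `∑ qᵢ = d s`, i.e. `pₖ = P(S = k)` for the number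
`S` of successes in independent trials with success probabilities `qᵢ`. It suffices to prove
`P(S ≤ c) ≥ P(Bin(d, s) ≤ c)` for `d s ≤ c`; applied to the probabilities `1 - qᵢ` this also
bounds the lower tail.

With `qᵢ + qⱼ` fixed, `P(S ≤ c)` is affine in `qᵢ qⱼ`. So for `qᵢ > s > qⱼ` the pair can be
replaced, without increasing `P(S ≤ c)`, either by `(s, qᵢ + qⱼ - s)`, which lowers the number of
probabilities different from `s`, or by a pair containing `0` or `1`, a trial with a certain
outcome. In the latter case induction on the number of trials leaves the comparison of
`Bin(n, s)` with `Bₑ + Bin(n - 1, (n s - e) / (n - 1))` for `e ∈ {0, 1}`. Along the path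
`x ↦ Bₓ + Bin(n - 1, (n s - x) / (n - 1))`, which passes through `Bin(n, s)` at `x = s`, the
derivative of `P(· ≤ c)` has the sign of `x - s`, because the binomial pmf is nonincreasing
beyond its mean.
-/

open Polynomial Set

theorem le_of_forall_mul_sub_nonneg_of_hasDerivAt {f f' : ℝ → ℝ} {a b : ℝ}
    (hf : ∀ x, HasDerivAt f (f' x) x) (h : ∀ x ∈ uIcc a b, 0 ≤ f' x * (x - a)) : f a ≤ f b := by
  have hcont : Continuous f := continuous_iff_continuousAt.2 fun x => (hf x).continuousAt
  have hderiv : ∀ D : Set ℝ, ∀ x ∈ interior D, HasDerivWithinAt f (f' x) (interior D) x :=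
    fun _ x _ => (hf x).hasDerivWithinAt
  rcases le_total a b with hab | hba
  · refine monotoneOn_of_hasDerivWithinAt_nonneg (convex_Icc a b) hcont.continuousOn
      (hderiv _) (fun x hx => ?_) (left_mem_Icc.2 hab) (right_mem_Icc.2 hab) hab
    rw [interior_Icc] at hx
    exact nonneg_of_mul_nonneg_left (h x (Icc_subset_uIcc (Ioo_subset_Icc_self hx)))
      (sub_pos.2 hx.1)
  · refine antitoneOn_of_hasDerivWithinAt_nonpos (convex_Icc b a) hcont.continuousOn
      (hderiv _) (fun x hx => ?_) (left_mem_Icc.2 hba) (right_mem_Icc.2 hba) hba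
    rw [interior_Icc] at hx
    exact nonpos_of_mul_nonneg_left (h x (Icc_subset_uIcc' (Ioo_subset_Icc_self hx)))
      (sub_neg.2 hx.2)

namespace List

theorem sum_mem_Icc {l : List ℝ} (hl : ∀ x ∈ l, x ∈ Icc 0 1) : l.sum ∈ Icc 0 (l.length : ℝ) :=
  ⟨sum_nonneg fun x hx => (hl x hx).1, by simpa using sum_le_card_nsmul l 1 fun x hx => (hl x hx).2⟩

theorem sum_map_one_sub (l : List ℝ) : (l.map (1 - ·)).sum = l.length - l.sum := by
  induction l with
  | nil => simp
  | cons a l ih => simp only [map_cons, sum_cons, ih, length_cons]; push_cast; ring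

theorem exists_perm_cons_cons_of_sum_eq {l : List ℝ} {s : ℝ} (hs : l.sum = l.length * s)
    (h : ¬ ∀ x ∈ l, x = s) : ∃ a b rest, l.Perm (a :: b :: rest) ∧ b < s ∧ s < a := by
  push Not at h
  obtain ⟨x, hx, hxs⟩ := h
  have hsum : (l.map id).sum = (l.map fun _ => s).sum := by simp [hs]
  obtain ⟨a, ha, hsa⟩ : ∃ a ∈ l, s < a := by
    by_contra! h
    exact (sum_lt_sum _ _ h ⟨x, hx, (h x hx).lt_of_ne hxs⟩).ne hsum
  obtain ⟨b, hb, hbs⟩ : ∃ b ∈ l, b < s := by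
    by_contra! h
    exact (sum_lt_sum _ _ h ⟨x, hx, (h x hx).lt_of_ne' hxs⟩).ne' hsum
  exact ⟨a, b, _, (perm_cons_erase ha).trans
    ((perm_cons_erase ((mem_erase_of_ne (hbs.trans hsa).ne).2 hb)).cons a), hbs, hsa⟩

end List

namespace Polynomial

theorem X_sub_C_eq_C_mul (r : ℝ) (hr : r ≠ 1) :
    X - C r = C (1 - r) * (C (1 - (1 - r)⁻¹) + C (1 - r)⁻¹ * X) := by
  have h : (1 - r) * (1 - r)⁻¹ = 1 := mul_inv_cancel₀ (sub_ne_zero.2 hr.symm)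
  rw [mul_add, ← mul_assoc, ← C_mul, ← C_mul, mul_sub, h, C_1, one_mul, mul_one,
    show 1 - r - 1 = -r by ring, C_neg]
  ring

theorem sum_range_mul_coeff_eq_derivative_eval_one {R : Type*} [CommSemiring R] {p : R[X]}
    {d : ℕ} (hd : p.natDegree ≤ d) :
    ∑ k ∈ Finset.range (d + 1), (k : R) * p.coeff k = p.derivative.eval 1 := by
  rw [derivative_eval, sum_over_range' _ (fun n => by simp) (d + 1) (by omega)]
  simp [mul_comm]

theorem splits_of_forall_aeval_eq_zero_im_eq_zero {p : ℝ[X]}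
    (h : ∀ z : ℂ, aeval z p = 0 → z.im = 0) : p.Splits := by
  refine Splits.of_splits_map (algebraMap ℝ ℂ) (IsAlgClosed.splits _) fun z hz => ⟨z.re, ?_⟩
  have hp : p ≠ 0 := by rintro rfl; simp at hz
  rw [mem_roots_map_of_injective (algebraMap ℝ ℂ).injective hp, ← aeval_def] at hz
  exact Complex.ext (by simp) (by simp [h z hz])

theorem nonpos_of_isRoot_of_coeff_nonneg {p : ℝ[X]} (hp : p ≠ 0) (hcoeff : ∀ k, 0 ≤ p.coeff k)
    {r : ℝ} (hr : p.IsRoot r) : r ≤ 0 := by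
  by_contra! hr0
  apply hp
  have hterms : ∀ i ∈ Finset.range (p.natDegree + 1), p.coeff i * r ^ i = 0 :=
    (Finset.sum_eq_zero_iff_of_nonneg fun i _ => mul_nonneg (hcoeff i) (pow_nonneg hr0.le i)).1
      (by rw [← eval_eq_sum_range]; exact hr)
  ext k
  rcases le_or_gt k p.natDegree with hk | hk
  · simpa [(pow_pos hr0 k).ne'] using hterms k (Finset.mem_range.2 (by omega))
  · simp [coeff_eq_zero_of_natDegree_lt hk]

end Polynomial

namespace PoissonBinomial

/-- `cdf l c` is the probability that at most `c` of independent trials with success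
probabilities `l` succeed; `pmf` and the coefficients of `pgf` are the point masses. The index is
an integer so that `c - 1` is never truncated. -/
noncomputable def cdf : List ℝ → ℤ → ℝ
  | [], c => if 0 ≤ c then 1 else 0
  | a :: l, c => (1 - a) * cdf l c + a * cdf l (c - 1)

noncomputable def pmf (l : List ℝ) (k : ℤ) : ℝ := cdf l k - cdf l (k - 1)

noncomputable def pgf (l : List ℝ) : ℝ[X] := (l.map fun q => C (1 - q) + C q * X).prod

lemma cdf_nil (c : ℤ) : cdf [] c = if 0 ≤ c then 1 else 0 := rfl

lemma cdf_cons (a : ℝ) (l : List ℝ) (c : ℤ) :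
    cdf (a :: l) c = (1 - a) * cdf l c + a * cdf l (c - 1) := rfl

@[simp] lemma cdf_zero_cons (l : List ℝ) (c : ℤ) : cdf (0 :: l) c = cdf l c := by
  simp [cdf_cons]

@[simp] lemma cdf_one_cons (l : List ℝ) (c : ℤ) : cdf (1 :: l) c = cdf l (c - 1) := by
  simp [cdf_cons]

lemma cdf_of_neg {c : ℤ} (hc : c < 0) : ∀ l : List ℝ, cdf l c = 0
  | [] => if_neg (by omega)
  | a :: l => by rw [cdf_cons, cdf_of_neg hc l, cdf_of_neg (by omega) l]; ring

lemma cdf_perm {l l' : List ℝ} (h : l.Perm l') (c : ℤ) : cdf l c = cdf l' c := by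
  induction h generalizing c with
  | nil => rfl
  | cons a _ ih => simp only [cdf_cons, ih]
  | swap a b l => simp only [cdf_cons]; ring
  | trans _ _ ih₁ ih₂ => rw [ih₁, ih₂]

lemma cdf_add_cdf_map_one_sub (l : List ℝ) (c : ℤ) :
    cdf l c + cdf (l.map (1 - ·)) (l.length - 1 - c) = 1 := by
  induction l generalizing c with
  | nil =>
    simp only [cdf_nil, List.map_nil, List.length_nil, Nat.cast_zero]
    split_ifs <;> first | omega | norm_num
  | cons a l ih =>
    simp only [List.map_cons, List.length_cons, cdf_cons]
    rw [show ((l.length + 1 : ℕ) : ℤ) - 1 - c = l.length - 1 - (c - 1) by push_cast; ring,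
      show (l.length : ℤ) - 1 - (c - 1) - 1 = l.length - 1 - c by ring]
    linear_combination (1 - a) * ih c + a * ih (c - 1)

lemma cdf_cons_cons_sub_cdf_cons_cons {x y a b : ℝ} (h : x + y = a + b) (l : List ℝ) (c : ℤ) :
    cdf (x :: y :: l) c - cdf (a :: b :: l) c
      = (x * y - a * b) * (cdf l c - 2 * cdf l (c - 1) + cdf l (c - 2)) := by
  obtain rfl : y = a + b - x := by linarith
  simp only [cdf_cons, show c - 1 - 1 = c - 2 by ring]
  ring

lemma pmf_cons (a : ℝ) (l : List ℝ) (k : ℤ) :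
    pmf (a :: l) k = (1 - a) * pmf l k + a * pmf l (k - 1) := by
  simp only [pmf, cdf_cons]; ring

lemma pmf_of_neg {k : ℤ} (hk : k < 0) (l : List ℝ) : pmf l k = 0 := by
  simp [pmf, cdf_of_neg hk, cdf_of_neg (show k - 1 < 0 by omega)]

lemma sum_Icc_pmf (l : List ℝ) {b c : ℕ} (h : b ≤ c) :
    ∑ k ∈ Finset.Icc b c, pmf l k = cdf l c - cdf l (b - 1) := by
  rw [← Finset.Ico_add_one_right_eq_Icc]
  simpa [pmf] using Finset.sum_Ico_sub (fun i : ℕ => cdf l (i - 1)) (Nat.le_succ_of_le h)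

lemma pgf_cons (a : ℝ) (l : List ℝ) : pgf (a :: l) = (C (1 - a) + C a * X) * pgf l := by
  simp [pgf]

lemma coeff_pgf (l : List ℝ) (k : ℕ) : (pgf l).coeff k = pmf l k := by
  induction l generalizing k with
  | nil => cases k <;> simp [pgf, pmf, cdf_nil, coeff_one, Int.add_nonneg]
  | cons a l ih =>
    rw [pgf_cons, add_mul, mul_assoc, coeff_add, coeff_C_mul, coeff_C_mul, pmf_cons, ih]
    cases k with
    | zero => simp [pmf_of_neg]
    | succ k => rw [coeff_X_mul, ih]; push_cast; ring_nf

lemma pgf_replicate (n : ℕ) (x : ℝ) : pgf (List.replicate n x) = (C x * X + C (1 - x)) ^ n := by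
  simp [pgf, add_comm]

lemma pmf_replicate (n : ℕ) (x : ℝ) (k : ℕ) :
    pmf (List.replicate n x) k = n.choose k * x ^ k * (1 - x) ^ (n - k) := by
  have hterm : ∀ m ∈ Finset.range (n + 1),
      ((C x * X) ^ m * C (1 - x) ^ (n - m) * (n.choose m : ℝ[X])).coeff k
        = if k = m then n.choose m * x ^ m * (1 - x) ^ (n - m) else 0 := by
    intro m _
    rw [show (C x * X) ^ m * C (1 - x) ^ (n - m) * (n.choose m : ℝ[X])
        = C (n.choose m * x ^ m * (1 - x) ^ (n - m)) * X ^ m by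
      simp only [map_mul, map_pow, map_natCast]; ring, coeff_C_mul_X_pow]
  rw [← coeff_pgf, pgf_replicate, add_pow, finsetSum_coeff, Finset.sum_congr rfl hterm,
    Finset.sum_ite_eq]
  split_ifs with h
  · rfl
  · rw [Nat.choose_eq_zero_of_lt (by simpa using h)]; simp

lemma pgf_eval_one (l : List ℝ) : (pgf l).eval 1 = 1 := by
  induction l with
  | nil => simp [pgf]
  | cons a l ih => simp [pgf_cons, ih]

lemma derivative_pgf_eval_one (l : List ℝ) : (pgf l).derivative.eval 1 = l.sum := by
  induction l with
  | nil => simp [pgf]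
  | cons a l ih => simp [pgf_cons, derivative_mul, ih, pgf_eval_one]

lemma pgf_replicate_zero_append (n : ℕ) (l : List ℝ) :
    pgf (List.replicate n 0 ++ l) = pgf l := by
  simp [pgf]

lemma pmf_replicate_le_pmf_replicate_sub_one {n : ℕ} {x : ℝ} (hx : x ∈ Icc 0 1) {c : ℤ}
    (hc : 0 < c) (h : (n + 1) * x ≤ c) :
    pmf (List.replicate n x) c ≤ pmf (List.replicate n x) (c - 1) := by
  obtain ⟨j, rfl⟩ : ∃ j : ℕ, c = j + 1 := ⟨c.toNat - 1, by omega⟩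
  rw [show (j : ℤ) + 1 - 1 = j by ring, show (j : ℤ) + 1 = ((j + 1 : ℕ) : ℤ) by push_cast; ring,
    pmf_replicate, pmf_replicate]
  push_cast at h
  obtain ⟨hx0, hx1⟩ := hx
  have hP : ∀ i k, 0 ≤ x ^ i * (1 - x) ^ k :=
    fun i k => mul_nonneg (pow_nonneg hx0 i) (pow_nonneg (by linarith) k)
  rcases lt_or_ge n (j + 1) with hn | hn
  · rw [Nat.choose_eq_zero_of_lt hn, Nat.cast_zero, zero_mul, zero_mul, mul_assoc]
    exact mul_nonneg (Nat.cast_nonneg _) (hP _ _)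
  have hpascal : (n.choose (j + 1) : ℝ) * (j + 1) = n.choose j * (n - j) := by
    have := Nat.choose_succ_right_eq n j
    rw [← Nat.cast_inj (R := ℝ)] at this
    push_cast [Nat.cast_sub (by omega : j ≤ n)] at this
    exact this
  have key : (n.choose (j + 1) : ℝ) * x ≤ n.choose j * (1 - x) := by
    refine le_of_mul_le_mul_right ?_ (by positivity : (0 : ℝ) < j + 1)
    calc (n.choose (j + 1) : ℝ) * x * (j + 1) = n.choose j * ((n - j) * x) := by
          rw [← mul_assoc, ← hpascal]; ring
      _ ≤ n.choose j * ((j + 1) * (1 - x)) :=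
          mul_le_mul_of_nonneg_left (by linarith) (Nat.cast_nonneg _)
      _ = n.choose j * (1 - x) * (j + 1) := by ring
  rw [show n - j = n - (j + 1) + 1 by omega, pow_succ, pow_succ]
  calc (n.choose (j + 1) : ℝ) * (x ^ j * x) * (1 - x) ^ (n - (j + 1))
      = n.choose (j + 1) * x * (x ^ j * (1 - x) ^ (n - (j + 1))) := by ring
    _ ≤ n.choose j * (1 - x) * (x ^ j * (1 - x) ^ (n - (j + 1))) :=
        mul_le_mul_of_nonneg_right key (hP _ _)
    _ = _ := by ring

lemma hasDerivAt_cdf_replicate (n : ℕ) (c : ℤ) (y : ℝ) :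
    HasDerivAt (fun y => cdf (List.replicate (n + 1) y) c)
      (-(n + 1) * pmf (List.replicate n y) c) y := by
  have hone : HasDerivAt (fun y : ℝ => 1 - y) (-1) y := by
    simpa using (hasDerivAt_id y).const_sub 1
  induction n generalizing c with
  | zero =>
    refine ((hone.mul_const (cdf [] c)).add
      ((hasDerivAt_id y).mul_const (cdf [] (c - 1)))).congr_deriv ?_
    simp only [pmf]; push_cast; ring
  | succ n ih =>
    refine ((hone.mul (ih c)).add ((hasDerivAt_id y).mul (ih (c - 1)))).congr_deriv ?_
    rw [List.replicate_succ, pmf_cons]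
    simp only [pmf, id, cdf_cons]
    push_cast; ring

lemma hasDerivAt_cdf_cons_replicate (n : ℕ) (A : ℝ) (c : ℤ) (x : ℝ) :
    HasDerivAt (fun x => cdf (x :: List.replicate (n + 1) ((A - x) / (n + 1))) c)
      ((x - (A - x) / (n + 1)) * (pmf (List.replicate n ((A - x) / (n + 1))) (c - 1)
        - pmf (List.replicate n ((A - x) / (n + 1))) c)) x := by
  set y := (A - x) / (n + 1)
  have hone : HasDerivAt (fun x : ℝ => 1 - x) (-1) x := by
    simpa using (hasDerivAt_id x).const_sub 1
  have hy : HasDerivAt (fun x : ℝ => (A - x) / (n + 1)) (-1 / (n + 1)) x := by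
    simpa using ((hasDerivAt_id x).const_sub A).div_const ((n : ℝ) + 1)
  have hF := fun c => (hasDerivAt_cdf_replicate n c y).comp x hy
  refine ((hone.mul (hF c)).add ((hasDerivAt_id x).mul (hF (c - 1)))).congr_deriv ?_
  have hpmf : cdf (List.replicate (n + 1) y) c - cdf (List.replicate (n + 1) y) (c - 1)
      = (1 - y) * pmf (List.replicate n y) c + y * pmf (List.replicate n y) (c - 1) := by
    show pmf _ c = _
    rw [List.replicate_succ, pmf_cons]
  have hk : -((n : ℝ) + 1) * (-1 / (n + 1)) = 1 := by field_simp
  simp only [id, Function.comp_apply]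
  linear_combination -hpmf
    + ((1 - x) * pmf (List.replicate n y) c + x * pmf (List.replicate n y) (c - 1)) * hk

lemma cdf_replicate_le_cdf_cons_replicate {m : ℕ} (hm : m ≠ 0) {q y s : ℝ} (hq : q ∈ Icc 0 1)
    (hy : y ∈ Icc 0 1) (hs : 0 < s) (hsum : q + m * y = (m + 1) * s) {c : ℤ}
    (hc : (m + 1) * s ≤ c) :
    cdf (List.replicate (m + 1) s) c ≤ cdf (q :: List.replicate m y) c := by
  obtain ⟨n, rfl⟩ := Nat.exists_eq_succ_of_ne_zero hm
  push_cast at hsum hc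
  have hn : (0 : ℝ) < n + 1 := by positivity
  set A := (n + 1 + 1) * s
  have hYs : (A - s) / (n + 1) = s := by field_simp; ring
  have hYq : (A - q) / (n + 1) = y := by field_simp; linarith
  have key := le_of_forall_mul_sub_nonneg_of_hasDerivAt (hasDerivAt_cdf_cons_replicate n A c)
    (a := s) (b := q) fun x hx => ?_
  · rwa [hYs, hYq] at key
  have hx0 : 0 ≤ x ∧ A - x ∈ Icc (0 : ℝ) (n + 1) := by
    rcases mem_uIcc.1 hx with h | h <;> refine ⟨?_, ?_, ?_⟩ <;> nlinarith [hq.1, hq.2, hy.1, hy.2]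
  obtain ⟨hx0, hA0, hA1⟩ := hx0
  have hD := pmf_replicate_le_pmf_replicate_sub_one (n := n) (c := c)
    ⟨div_nonneg hA0 hn.le, (div_le_one hn).2 hA1⟩
    (by exact_mod_cast (show (0 : ℝ) < c by nlinarith))
    (by rw [mul_div_cancel₀ _ hn.ne']; linarith)
  have hxY : x - (A - x) / (n + 1) = (n + 1 + 1) / (n + 1) * (x - s) := by field_simp; ring
  rw [hxY]
  nlinarith [mul_nonneg (mul_nonneg (by positivity : (0 : ℝ) ≤ (n + 1 + 1) / (n + 1))
    (sq_nonneg (x - s))) (sub_nonneg.2 hD)]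

lemma cdf_replicate_le_cdf_cons {e s : ℝ} (he : e = 0 ∨ e = 1) (hs : 0 < s) {l : List ℝ}
    (hl0 : l ≠ []) (hl : ∀ x ∈ l, x ∈ Icc 0 1)
    (ih : ∀ y : ℝ, l.sum = l.length * y → ∀ c : ℤ, l.sum ≤ c →
      cdf (List.replicate l.length y) c ≤ cdf l c)
    (hsum : e + l.sum = (l.length + 1) * s) {c : ℤ} (hc : (l.length + 1) * s ≤ c) :
    cdf (List.replicate (l.length + 1) s) c ≤ cdf (e :: l) c := by
  have hm : (0 : ℝ) < l.length := by simpa [List.length_pos_iff] using hl0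
  set y := l.sum / l.length
  have hy : l.sum = l.length * y := (mul_div_cancel₀ _ hm.ne').symm
  have hy01 : y ∈ Icc 0 1 := ⟨div_nonneg (List.sum_mem_Icc hl).1 hm.le,
    (div_le_one hm).2 (List.sum_mem_Icc hl).2⟩
  refine (cdf_replicate_le_cdf_cons_replicate (by simpa using hl0)
    (by rcases he with rfl | rfl <;> simp) hy01 hs (hy ▸ hsum) hc).trans ?_
  rcases he with rfl | rfl
  · simpa using ih y hy c (by linarith)
  · simpa using ih y hy (c - 1) (by push_cast; linarith)

lemma cdf_smoothing {a b s : ℝ} (ha : a ∈ Icc 0 1) (hb : b ∈ Icc 0 1) (hbs : b ≤ s) (hsa : s ≤ a)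
    (l : List ℝ) (c : ℤ) :
    cdf (s :: (a + b - s) :: l) c ≤ cdf (a :: b :: l) c ∨
      ∃ e x : ℝ, (e = 0 ∨ e = 1) ∧ x ∈ Icc 0 1 ∧ e + x = a + b ∧
        cdf (e :: x :: l) c ≤ cdf (a :: b :: l) c := by
  have hdiff := fun x y (h : x + y = a + b) => cdf_cons_cons_sub_cdf_cons_cons h l c
  set Δ := cdf l c - 2 * cdf l (c - 1) + cdf l (c - 2)
  rcases le_or_gt Δ 0 with hΔ | hΔ
  · left
    nlinarith [hdiff s (a + b - s) (by ring), mul_nonneg (sub_nonneg.2 hsa) (sub_nonneg.2 hbs)]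
  right
  rcases le_or_gt (a + b) 1 with h1 | h1
  · refine ⟨0, a + b, .inl rfl, ⟨by linarith [ha.1, hb.1], h1⟩, by ring, ?_⟩
    nlinarith [hdiff 0 (a + b) (by ring), mul_nonneg (mul_nonneg ha.1 hb.1) hΔ.le]
  · refine ⟨1, a + b - 1, .inr rfl, ⟨by linarith, by linarith [ha.2, hb.2]⟩, by ring, ?_⟩
    nlinarith [hdiff 1 (a + b - 1) (by ring),
      mul_nonneg (mul_nonneg (sub_nonneg.2 ha.2) (sub_nonneg.2 hb.2)) hΔ.le]

lemma cdf_replicate_le_cdf_of_forall_length_lt {n : ℕ}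
    (ih : ∀ l : List ℝ, l.length < n → (∀ x ∈ l, x ∈ Icc 0 1) → ∀ s : ℝ,
      l.sum = l.length * s → ∀ c : ℤ, l.sum ≤ c → cdf (List.replicate l.length s) c ≤ cdf l c)
    {s : ℝ} (k : ℕ) : ∀ l : List ℝ, l.countP (· ≠ s) = k → l.length = n →
      (∀ x ∈ l, x ∈ Icc 0 1) → l.sum = n * s → ∀ c : ℤ, l.sum ≤ c →
        cdf (List.replicate n s) c ≤ cdf l c := by
  induction k using Nat.strong_induction_on with
  | _ k ihk =>
  intro l hk hlen hl hs c hc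
  by_cases hconst : ∀ x ∈ l, x = s
  · rw [List.eq_replicate_iff.2 ⟨hlen, hconst⟩]
  obtain ⟨a, b, rest, hperm, hbs, hsa⟩ := List.exists_perm_cons_cons_of_sum_eq (hlen ▸ hs) hconst
  rw [cdf_perm hperm]
  rw [hperm.sum_eq, List.sum_cons, List.sum_cons] at hs hc
  rw [hperm.countP_eq] at hk
  obtain ⟨ha01, hb01, hrest⟩ : a ∈ Icc 0 1 ∧ b ∈ Icc 0 1 ∧ ∀ x ∈ rest, x ∈ Icc 0 1 := by
    simpa using fun x hx => hl x (hperm.mem_iff.2 hx)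
  obtain rfl : rest.length + 2 = n := by simpa using hperm.length_eq.symm.trans hlen
  rcases cdf_smoothing ha01 hb01 hbs.le hsa.le rest c with hle | ⟨e, x, he, hx01, hex, hle⟩
  · refine le_trans (ihk _ ?_ (s :: (a + b - s) :: rest) rfl rfl ?_ ?_ c ?_) hle
    · simp [List.countP_cons, hsa.ne', hbs.ne] at hk ⊢
      split_ifs <;> omega
    · simp only [List.forall_mem_cons]
      exact ⟨⟨hb01.1.trans hbs.le, hsa.le.trans ha01.2⟩,
        ⟨by linarith [hb01.1], by linarith [ha01.2]⟩, hrest⟩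
    · simp only [List.sum_cons]; linarith
    · simp only [List.sum_cons]; linarith
  · have hxrest : ∀ z ∈ x :: rest, z ∈ Icc 0 1 := List.forall_mem_cons.2 ⟨hx01, hrest⟩
    refine le_trans (cdf_replicate_le_cdf_cons he (hb01.1.trans_lt hbs) (List.cons_ne_nil _ _)
      hxrest (fun y hy c' hc' => ih _ (by simp) hxrest y hy c' hc') ?_ ?_) hle
    · simp only [List.sum_cons, List.length_cons] at hs ⊢; push_cast at hs ⊢; linarith
    · simp only [List.length_cons] at hs ⊢; push_cast at hs ⊢; linarith

theorem cdf_replicate_le_cdf {l : List ℝ} (hl : ∀ x ∈ l, x ∈ Icc 0 1) {s : ℝ}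
    (hs : l.sum = l.length * s) {c : ℤ} (hc : l.sum ≤ c) :
    cdf (List.replicate l.length s) c ≤ cdf l c := by
  obtain ⟨n, hn⟩ : ∃ n, l.length = n := ⟨_, rfl⟩
  induction n using Nat.strong_induction_on generalizing l s c with
  | _ n ih =>
  subst hn
  exact cdf_replicate_le_cdf_of_forall_length_lt
    (fun l' hl' hl'01 s' hs' c' hc' => ih _ hl' hl'01 hs' hc' rfl) _ l rfl rfl hl hs c hc

theorem cdf_le_cdf_replicate {l : List ℝ} (hl : ∀ x ∈ l, x ∈ Icc 0 1) {s : ℝ}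
    (hs : l.sum = l.length * s) {c : ℤ} (hc : c + 1 ≤ l.sum) :
    cdf l c ≤ cdf (List.replicate l.length s) c := by
  have h := cdf_replicate_le_cdf (l := l.map (1 - ·)) (s := 1 - s) (c := l.length - 1 - c)
    (by
      simp only [List.mem_map]
      rintro _ ⟨x, hx, rfl⟩
      exact ⟨by linarith [(hl x hx).2], by linarith [(hl x hx).1]⟩)
    (by simp [List.sum_map_one_sub, hs]; ring)
    (by rw [List.sum_map_one_sub]; push_cast; linarith)
  have h₁ := cdf_add_cdf_map_one_sub l c
  have h₂ := cdf_add_cdf_map_one_sub (List.replicate l.length s) c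
  simp only [List.length_map, List.length_replicate, List.map_replicate] at h h₂
  linarith

theorem exists_eq_pgf {p : ℝ[X]} (hroots : ∀ z : ℂ, aeval z p = 0 → z.im = 0)
    (hcoeff : ∀ k, 0 ≤ p.coeff k) (h1 : p.eval 1 = 1) :
    ∃ l : List ℝ, l.length = p.natDegree ∧ (∀ q ∈ l, q ∈ Icc 0 1) ∧ p = pgf l := by
  have hp : p ≠ 0 := by rintro rfl; simp at h1
  have hsplit := Polynomial.splits_of_forall_aeval_eq_zero_im_eq_zero hroots
  have hr : ∀ r ∈ p.roots, r ≤ 0 := fun r hr =>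
    nonpos_of_isRoot_of_coeff_nonneg hp hcoeff (isRoot_of_mem_roots hr)
  set l := (p.roots.map fun r => (1 - r)⁻¹).toList
  have hfac : p = C (p.leadingCoeff * (p.roots.map (1 - ·)).prod) * pgf l := by
    conv_lhs => rw [hsplit.eq_prod_roots]
    rw [Multiset.map_congr rfl fun r hr' => X_sub_C_eq_C_mul r (by linarith [hr r hr']),
      Multiset.prod_map_mul, C_mul, map_multiset_prod, Multiset.map_map, mul_assoc]
    congr 2
    rw [pgf, ← Multiset.prod_coe, ← Multiset.map_coe, Multiset.coe_toList, Multiset.map_map]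
    rfl
  have hK : p.leadingCoeff * (p.roots.map (1 - ·)).prod = 1 := by
    simpa [pgf_eval_one, h1] using (congrArg (eval 1) hfac).symm
  refine ⟨l, by simp [l, hsplit.natDegree_eq_card_roots], ?_, by rw [hfac, hK, C_1, one_mul]⟩
  simp only [l, Multiset.mem_toList, Multiset.mem_map]
  rintro _ ⟨r, hr', rfl⟩
  have := hr r hr'
  exact ⟨inv_nonneg.2 (by linarith), inv_le_one_of_one_le₀ (by linarith)⟩

theorem exists_eq_pgf_of_natDegree_le {p : ℝ[X]} {d : ℕ} (hdeg : p.natDegree ≤ d)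
    (hroots : ∀ z : ℂ, aeval z p = 0 → z.im = 0) (hcoeff : ∀ k, 0 ≤ p.coeff k)
    (h1 : p.eval 1 = 1) :
    ∃ l : List ℝ, l.length = d ∧ (∀ q ∈ l, q ∈ Icc 0 1) ∧ p = pgf l := by
  obtain ⟨l, hlen, hl, rfl⟩ := exists_eq_pgf hroots hcoeff h1
  refine ⟨List.replicate (d - l.length) 0 ++ l, by simp; omega, ?_,
    (pgf_replicate_zero_append _ _).symm⟩
  simp only [List.mem_append, List.mem_replicate]
  rintro q (⟨-, rfl⟩ | hq)
  exacts [⟨le_rfl, zero_le_one⟩, hl q hq]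

end PoissonBinomial

/-- Hoeffding's theorem: a real-rooted probability generating polynomial of
degree at most `d` with mean `d·s` is at least as concentrated around the mean
as the binomial distribution with parameters `d` and `s`. -/
theorem stmt_9 (d : ℕ) (p : Polynomial ℝ)
    (hdeg : p.natDegree ≤ d)
    (hroots : ∀ z : ℂ, Polynomial.aeval z p = 0 → z.im = 0)
    (hcoeff : ∀ k, 0 ≤ p.coeff k)
    (h1 : p.eval 1 = 1)
    (s : ℝ) (hs : ∑ k ∈ Finset.range (d + 1), (k : ℝ) * p.coeff k = d * s)
    (b c : ℕ) (hb : (b : ℝ) ≤ d * s) (hc : (d : ℝ) * s ≤ c) :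
    ∑ k ∈ Finset.Icc b c, (d.choose k : ℝ) * s ^ k * (1 - s) ^ (d - k)
      ≤ ∑ k ∈ Finset.Icc b c, p.coeff k := by
  obtain ⟨l, rfl, hl, rfl⟩ := PoissonBinomial.exists_eq_pgf_of_natDegree_le hdeg hroots hcoeff h1
  have hsum : l.sum = l.length * s := by
    rw [← PoissonBinomial.derivative_pgf_eval_one,
      ← Polynomial.sum_range_mul_coeff_eq_derivative_eval_one hdeg, hs]
  have hbc : b ≤ c := by exact_mod_cast hb.trans hc
  simp_rw [← PoissonBinomial.pmf_replicate, PoissonBinomial.coeff_pgf,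
    PoissonBinomial.sum_Icc_pmf _ hbc]
  linarith [PoissonBinomial.cdf_replicate_le_cdf hl hsum (c := c)
      (by rw [hsum]; exact_mod_cast hc),
    PoissonBinomial.cdf_le_cdf_replicate hl hsum (c := b - 1)
      (by rw [hsum]; push_cast; linarith)]
end

section
/- Capacity preservation under taking a coefficient: Let P(x_1,...,x_n) be a real stable polynomial with non-negative coefficients in which x_1 has degree d, and let Q(x_2,...,x_n) be the coefficient of x_1^r in P. Let α = (r, α_2, ..., α_n) with α_i ≥ 0 and α' = (α_2,...,α_n). Then cap_{α'}(Q) ≥ C(d,r) · (r/d)^r · ((d-r)/d)^{d-r} · cap_α(P). -/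
/-!
Fix `x' > 0` and let `p(t) = P(t, x')`, a polynomial of degree `d` with nonnegative coefficients
and `p_r = Q(x')`. The polynomials `t ↦ P(t, x' + iε)` have no zeros in the upper half-plane and
converge to `p` as `ε → 0⁺`, so by Hurwitz's theorem `p` has none either, i.e. `p` is real-rooted.
Newton's inequalities then make `b_j = p_j / (d choose j)` log-concave, hence
`b_j ≤ b_r ρ^(j - r)` for some `ρ > 0` and `p(t) ≤ b_r ρ^(-r) (1 + ρt)^d`. Since
`cap_α(P) · t^r · ∏ x_i'^α_i ≤ p(t)`, evaluating at `ρt = r / (d - r)` bounds `p_r`.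
-/

open Polynomial Filter Topology

namespace Polynomial

section OrderedSemiring

variable {R : Type*} [CommSemiring R] [PartialOrder R] {p : R[X]}

theorem eval_le_eval_of_coeff_nonneg [IsOrderedRing R] (hp : ∀ i, 0 ≤ p.coeff i) {x y : R}
    (hx : 0 ≤ x) (hxy : x ≤ y) : p.eval x ≤ p.eval y := by
  simp only [eval_eq_sum_range]
  exact Finset.sum_le_sum fun i _ => mul_le_mul_of_nonneg_left (pow_le_pow_left₀ hx hxy i) (hp i)

theorem eval_pos_of_coeff_nonneg [IsStrictOrderedRing R] (hp : ∀ i, 0 ≤ p.coeff i) {k : ℕ}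
    (hk : 0 < p.coeff k) {x : R} (hx : 0 < x) : 0 < p.eval x := by
  rw [eval_eq_sum_range]
  exact Finset.sum_pos' (fun i _ => mul_nonneg (hp i) (pow_nonneg hx.le i))
    ⟨k, Finset.mem_range_succ_iff.mpr (le_natDegree_of_ne_zero hk.ne'), mul_pos hk (pow_pos hx k)⟩

end OrderedSemiring

theorem reverse_natDegree_of_coeff_zero_ne_zero {R : Type*} [Semiring R] {p : R[X]}
    (h0 : p.coeff 0 ≠ 0) : p.reverse.natDegree = p.natDegree := by
  rw [reverse_natDegree, natTrailingDegree_eq_zero.mpr (Or.inr h0), Nat.sub_zero]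

noncomputable def normCoeff (p : ℝ[X]) (j : ℕ) : ℝ := p.coeff j / p.natDegree.choose j

theorem normCoeff_derivative (p : ℝ[X]) (j : ℕ) :
    (derivative p).normCoeff j = p.natDegree * p.normCoeff (j + 1) := by
  rw [normCoeff, normCoeff, natDegree_derivative, coeff_derivative]
  obtain ⟨d, hd⟩ | hd : (∃ d, p.natDegree = d + 1) ∨ p.natDegree = 0 := by
    rcases p.natDegree with _ | d <;> simp
  · rw [hd, Nat.add_sub_cancel]
    rcases lt_or_ge d j with hj | hj
    · simp [Nat.choose_eq_zero_of_lt hj, Nat.choose_eq_zero_of_lt (Nat.succ_lt_succ hj)]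
    have hchoose : (d + 1) * ((d.choose j : ℕ) : ℝ) = (d + 1).choose (j + 1) * (j + 1) := by
      exact_mod_cast Nat.add_one_mul_choose_eq d j
    have h0 : ((d.choose j : ℕ) : ℝ) ≠ 0 := by positivity [Nat.choose_pos hj]
    have h1 : (((d + 1).choose (j + 1) : ℕ) : ℝ) ≠ 0 := by
      positivity [Nat.choose_pos (Nat.succ_le_succ hj)]
    push_cast at hchoose ⊢
    rw [div_eq_iff h0, mul_div_assoc', div_mul_eq_mul_div, eq_div_iff h1]
    linear_combination (-p.coeff (j + 1)) * hchoose
  · simp [hd, coeff_eq_zero_of_natDegree_lt (hd ▸ j.succ_pos)]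

theorem Splits.derivative {p : ℝ[X]} (hp : p.Splits) : (derivative p).Splits := by
  rw [splits_iff_card_roots] at hp ⊢
  refine le_antisymm (card_roots' _) ?_
  have := card_roots_le_derivative p
  rw [natDegree_derivative]
  omega

theorem Splits.reverse {K : Type*} [Field K] {p : K[X]} (hp : p.Splits) : p.reverse.Splits := by
  induction hp using Submonoid.closure_induction with
  | mem f hf =>
    refine Splits.of_natDegree_le_one ((reverse_natDegree_le f).trans ?_)
    rcases hf with ⟨a, rfl⟩ | ⟨a, rfl⟩ <;> simp
  | one => exact Splits.of_natDegree_le_one ((reverse_natDegree_le 1).trans (by simp))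
  | mul f g _ _ hf hg => rw [reverse_mul_of_domain]; exact hf.mul hg

theorem normCoeff_reverse {p : ℝ[X]} (h0 : p.coeff 0 ≠ 0) {j : ℕ} (hj : j ≤ p.natDegree) :
    p.reverse.normCoeff j = p.normCoeff (p.natDegree - j) := by
  rw [normCoeff, normCoeff, coeff_reverse, revAt_le hj,
    reverse_natDegree_of_coeff_zero_ne_zero h0, Nat.choose_symm hj]

theorem Splits.normCoeff_mul_le_sq_of_natDegree_eq_two {p : ℝ[X]} (hp : p.Splits)
    (h2 : p.natDegree = 2) : p.normCoeff 0 * p.normCoeff 2 ≤ p.normCoeff 1 ^ 2 := by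
  obtain ⟨x, hx⟩ := hp.exists_eval_eq_zero (degree_ne_of_natDegree_ne (n := 0) (by omega))
  have hroot : p.coeff 0 + p.coeff 1 * x + p.coeff 2 * x ^ 2 = 0 := by
    simpa [eval_eq_sum_range, h2, Finset.sum_range_succ] using hx
  have hdisc : (p.coeff 1 / 2) ^ 2 - p.coeff 0 * p.coeff 2 =
      (p.coeff 2 * x + p.coeff 1 / 2) ^ 2 := by
    linear_combination (-p.coeff 2) * hroot
  simp only [normCoeff, h2, Nat.choose_zero_right, Nat.choose_one_right, Nat.choose_self,
    Nat.cast_one, Nat.cast_ofNat, div_one]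
  linarith [sq_nonneg (p.coeff 2 * x + p.coeff 1 / 2)]

theorem normCoeff_mul_le_sq_of_derivative {p : ℝ[X]} {k : ℕ}
    (h : (derivative p).normCoeff k * (derivative p).normCoeff (k + 2) ≤
      (derivative p).normCoeff (k + 1) ^ 2) :
    p.normCoeff (k + 1) * p.normCoeff (k + 3) ≤ p.normCoeff (k + 2) ^ 2 := by
  simp only [normCoeff_derivative] at h
  rcases Nat.eq_zero_or_pos p.natDegree with hd | hd
  · simp [normCoeff, hd, Nat.choose_eq_zero_of_lt]
  have : (0 : ℝ) < p.natDegree ^ 2 := by positivity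
  nlinarith

/-- Newton's inequalities. Differentiation shifts the sequence `normCoeff`, which reduces index
`k + 1` to index `k`; at index `0`, reversal turns the claim into the one at index `d - 2`, which
differentiation reduces to a quadratic. -/
theorem Splits.normCoeff_mul_le_sq {p : ℝ[X]} (hp : p.Splits) {k : ℕ}
    (hk : k + 2 ≤ p.natDegree) :
    p.normCoeff k * p.normCoeff (k + 2) ≤ p.normCoeff (k + 1) ^ 2 := by
  induction h : p.natDegree using Nat.strong_induction_on generalizing p k with
  | _ d ih =>
  subst h
  cases k with
  | succ k =>
    exact normCoeff_mul_le_sq_of_derivative (ih (p.natDegree - 1) (by omega) hp.derivative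
      (by rw [natDegree_derivative]; omega) (natDegree_derivative p))
  | zero =>
    rcases hk.eq_or_lt with h2 | h3
    · exact hp.normCoeff_mul_le_sq_of_natDegree_eq_two h2.symm
    by_cases h0 : p.coeff 0 = 0
    · simp [normCoeff, h0, sq_nonneg]
    have hdeg := reverse_natDegree_of_coeff_zero_ne_zero h0
    obtain ⟨m, hm⟩ : ∃ m, p.natDegree = m + 3 := ⟨p.natDegree - 3, by omega⟩
    have := normCoeff_mul_le_sq_of_derivative (p := p.reverse) (k := m)
      (ih (p.natDegree - 1) (by omega) hp.reverse.derivative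
        (by rw [natDegree_derivative, hdeg]; omega) (by rw [natDegree_derivative, hdeg]))
    rwa [normCoeff_reverse h0 (by omega), normCoeff_reverse h0 (by omega),
      normCoeff_reverse h0 (by omega), hm, show m + 3 - (m + 1) = 2 by omega,
      show m + 3 - (m + 3) = 0 by omega, show m + 3 - (m + 2) = 1 by omega, mul_comm] at this

theorem eval_le_mul_add_one_pow {p : ℝ[X]} {M ρ t : ℝ}
    (hp : ∀ j ≤ p.natDegree, p.coeff j ≤ M * p.natDegree.choose j * ρ ^ j) (ht : 0 ≤ t) :
    p.eval t ≤ M * (ρ * t + 1) ^ p.natDegree := by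
  rw [eval_eq_sum_range, add_pow, Finset.mul_sum]
  refine Finset.sum_le_sum fun j hj => ?_
  calc p.coeff j * t ^ j ≤ M * p.natDegree.choose j * ρ ^ j * t ^ j := by
        gcongr; exact hp j (Nat.lt_succ_iff.mp (Finset.mem_range.mp hj))
    _ = M * ((ρ * t) ^ j * 1 ^ (p.natDegree - j) * p.natDegree.choose j) := by ring

end Polynomial

section LogConcave

variable {b : ℕ → ℝ} {d : ℕ}

theorem mul_le_mul_of_logConcave (hpos : ∀ j ≤ d, 0 < b j)
    (hlc : ∀ k, k + 2 ≤ d → b k * b (k + 2) ≤ b (k + 1) ^ 2) {i j : ℕ} (hij : i ≤ j)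
    (hj : j + 1 ≤ d) : b (j + 1) * b i ≤ b j * b (i + 1) := by
  induction j, hij using Nat.le_induction with
  | base => rw [mul_comm]
  | succ j hij ih =>
    refine le_of_mul_le_mul_left ?_ (hpos j (by omega))
    nlinarith [mul_le_mul_of_nonneg_right (hlc j hj) (hpos i (by omega)).le,
      mul_le_mul_of_nonneg_left (ih (by omega)) (hpos (j + 1) (by omega)).le]

theorem exists_div_pow_le_of_logConcave (hpos : ∀ j ≤ d, 0 < b j)
    (hlc : ∀ k, k + 2 ≤ d → b k * b (k + 2) ≤ b (k + 1) ^ 2) {r : ℕ} (hr : r ≤ d) :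
    ∃ ρ > 0, ∀ j ≤ d, b j / ρ ^ j ≤ b r / ρ ^ r := by
  obtain ⟨ρ, hρ, hup, hdown⟩ : ∃ ρ > 0, (∀ j, r ≤ j → j + 1 ≤ d → b (j + 1) ≤ ρ * b j) ∧
      ∀ j < r, ρ * b j ≤ b (j + 1) := by
    rcases hr.lt_or_eq with hr | rfl
    · refine ⟨b (r + 1) / b r, div_pos (hpos _ hr) (hpos _ hr.le), fun j hrj hj => ?_,
        fun j hj => ?_⟩
      · rw [div_mul_eq_mul_div, le_div_iff₀ (hpos r hr.le), mul_comm (b (r + 1))]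
        exact mul_le_mul_of_logConcave hpos hlc hrj hj
      · rw [div_mul_eq_mul_div, div_le_iff₀ (hpos r hr.le), mul_comm (b (j + 1))]
        exact mul_le_mul_of_logConcave hpos hlc hj.le hr
    · refine ⟨b r / b (r - 1), div_pos (hpos _ le_rfl) (hpos _ (by omega)),
        fun j hrj hj => by omega, fun j hj => ?_⟩
      rw [div_mul_eq_mul_div, div_le_iff₀ (hpos _ (by omega))]
      have := mul_le_mul_of_logConcave hpos hlc (i := j) (j := r - 1) (by omega) (by omega)
      rwa [Nat.sub_add_cancel (by omega), mul_comm (b (r - 1))] at this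
  refine ⟨ρ, hρ, fun j hj => ?_⟩
  rcases le_total r j with hrj | hjr
  · induction j, hrj using Nat.le_induction with
    | base => rfl
    | succ j hrj ih =>
      calc b (j + 1) / ρ ^ (j + 1) ≤ ρ * b j / ρ ^ (j + 1) := by
            gcongr; exact hup j hrj hj
        _ = b j / ρ ^ j := by field_simp; ring
        _ ≤ b r / ρ ^ r := ih (by omega)
  · induction hjr using Nat.decreasingInduction with
    | self => rfl
    | of_succ j hjr ih =>
      calc b j / ρ ^ j = ρ * b j / ρ ^ (j + 1) := by field_simp; ring
        _ ≤ b (j + 1) / ρ ^ (j + 1) := by gcongr; exact hdown j hjr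
        _ ≤ b r / ρ ^ r := ih (by omega)

end LogConcave

theorem le_of_forall_le_mul_add_one_pow {c B : ℝ} {d : ℕ}
    (h : ∀ u > 0, c ≤ B * (u + 1) ^ d) : c ≤ B := by
  have hlim : Tendsto (fun u : ℝ => B * (u + 1) ^ d) (𝓝[>] 0) (𝓝 B) := by
    simpa using ((by fun_prop : Continuous fun u : ℝ => B * (u + 1) ^ d).tendsto 0).mono_left
      nhdsWithin_le_nhds
  exact ge_of_tendsto hlim (eventually_nhdsWithin_of_forall h)

theorem mul_le_of_forall_mul_pow_le_mul_add_one_pow {c B : ℝ} {d r : ℕ} (hr : r ≤ d)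
    (h : ∀ s > 0, c * s ^ r ≤ B * (s + 1) ^ d) :
    ((r : ℝ) / d) ^ r * (((d - r : ℕ) : ℝ) / d) ^ (d - r) * c ≤ B := by
  rcases Nat.eq_zero_or_pos r with rfl | hr0
  · have : (((d - 0 : ℕ) : ℝ) / d) ^ (d - 0) = 1 := by
      rcases eq_or_ne d 0 with rfl | hd <;> simp [*]
    rw [pow_zero, this, one_mul, one_mul]
    exact le_of_forall_le_mul_add_one_pow fun u hu => by simpa using h u hu
  rcases hr.lt_or_eq with hrd | rfl
  · -- `s = r / (d - r)` minimizes `(s + 1) ^ d / s ^ r`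
    set e : ℝ := ((d - r : ℕ) : ℝ)
    have he : 0 < e := Nat.cast_pos.mpr (Nat.sub_pos_of_lt hrd)
    have hd : (0 : ℝ) < d := by exact_mod_cast hr0.trans hrd
    have hs : (r : ℝ) / e + 1 = d / e := by
      field_simp; simp only [e]; push_cast [Nat.cast_sub hr]; ring
    have key := h (r / e) (by positivity)
    rw [hs] at key
    calc ((r : ℝ) / d) ^ r * (e / d) ^ (d - r) * c = c * (r / e) ^ r * (e / d) ^ d := by
          rw [pow_sub₀ _ (by positivity) hr]; simp only [div_pow]; field_simp
      _ ≤ B * (d / e) ^ d * (e / d) ^ d := by gcongr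
      _ = B := by rw [mul_assoc, ← mul_pow]; field_simp; simp
  · rw [div_self (by positivity), one_pow, Nat.sub_self, pow_zero, one_mul, one_mul]
    refine le_of_forall_le_mul_add_one_pow (d := r) fun u hu => ?_
    calc c = c * u⁻¹ ^ r * u ^ r := by
          rw [mul_assoc, ← mul_pow, inv_mul_cancel₀ hu.ne', one_pow, mul_one]
      _ ≤ B * (u⁻¹ + 1) ^ r * u ^ r :=
          mul_le_mul_of_nonneg_right (h u⁻¹ (inv_pos.mpr hu)) (by positivity)
      _ = B * (u + 1) ^ r := by rw [mul_assoc, ← mul_pow]; field_simp; ring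

namespace Polynomial

theorem Splits.le_coeff_of_coeff_pos {p : ℝ[X]} (hp : p.Splits)
    (hpos : ∀ j ≤ p.natDegree, 0 < p.coeff j) {r : ℕ} (hr : r ≤ p.natDegree) {c : ℝ}
    (hc : ∀ t > 0, c * t ^ r ≤ p.eval t) :
    (p.natDegree.choose r : ℝ) * ((r : ℝ) / p.natDegree) ^ r *
      (((p.natDegree - r : ℕ) : ℝ) / p.natDegree) ^ (p.natDegree - r) * c ≤ p.coeff r := by
  set d := p.natDegree
  have hchoose : ∀ j ≤ d, (0 : ℝ) < d.choose j := fun j hj =>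
    Nat.cast_pos.mpr (Nat.choose_pos hj)
  have hcoeff : ∀ j ≤ d, p.coeff j = d.choose j * p.normCoeff j := fun j hj => by
    rw [normCoeff, mul_div_cancel₀ _ (hchoose j hj).ne']
  obtain ⟨ρ, hρ, hmax⟩ := exists_div_pow_le_of_logConcave (b := p.normCoeff)
    (fun j hj => div_pos (hpos j hj) (hchoose j hj)) (fun k hk => hp.normCoeff_mul_le_sq hk) hr
  have hbound : ∀ s > 0, c * s ^ r ≤ p.normCoeff r * (s + 1) ^ d := fun s hs => by
    have hle := eval_le_mul_add_one_pow (M := p.normCoeff r / ρ ^ r) (ρ := ρ) (t := s / ρ)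
      (fun j hj => by
        rw [hcoeff j hj]
        calc (d.choose j : ℝ) * p.normCoeff j
            ≤ d.choose j * (p.normCoeff r / ρ ^ r * ρ ^ j) := by
              gcongr; exact (div_le_iff₀ (by positivity)).mp (hmax j hj)
          _ = _ := by ring) (by positivity)
    have := (hc (s / ρ) (by positivity)).trans hle
    rw [mul_div_cancel₀ _ hρ.ne', div_pow] at this
    calc c * s ^ r = c * (s ^ r / ρ ^ r) * ρ ^ r := by field_simp
      _ ≤ p.normCoeff r / ρ ^ r * (s + 1) ^ d * ρ ^ r := by gcongr
      _ = p.normCoeff r * (s + 1) ^ d := by field_simp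
  calc _ = (d.choose r : ℝ) * (((r : ℝ) / d) ^ r * (((d - r : ℕ) : ℝ) / d) ^ (d - r) * c) := by
        ring
    _ ≤ d.choose r * p.normCoeff r := by
        gcongr; exact mul_le_of_forall_mul_pow_le_mul_add_one_pow hr hbound
    _ = p.coeff r := (hcoeff r hr).symm

theorem Splits.le_coeff_of_coeff_nonneg {p : ℝ[X]} (hp : p.Splits) (hnn : ∀ j, 0 ≤ p.coeff j)
    {r : ℕ} (hr : r ≤ p.natDegree) {c : ℝ} (hc : ∀ t > 0, c * t ^ r ≤ p.eval t) :
    (p.natDegree.choose r : ℝ) * ((r : ℝ) / p.natDegree) ^ r *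
      (((p.natDegree - r : ℕ) : ℝ) / p.natDegree) ^ (p.natDegree - r) * c ≤ p.coeff r := by
  rcases eq_or_ne p 0 with rfl | hp0
  · simpa using mul_nonpos_of_nonneg_of_nonpos (by positivity) (by simpa using hc 1 one_pos)
  have hlead : 0 < p.leadingCoeff := (hnn _).lt_of_ne' (leadingCoeff_ne_zero.mpr hp0)
  -- `p(t + ε)` has positive coefficients and dominates `p(t)` for `t > 0`; then let `ε → 0⁺`
  have hshift : ∀ ε > 0, (p.natDegree.choose r : ℝ) * ((r : ℝ) / p.natDegree) ^ r *
      (((p.natDegree - r : ℕ) : ℝ) / p.natDegree) ^ (p.natDegree - r) * c ≤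
        (hasseDeriv r p).eval ε := fun ε hε => by
    set q := Polynomial.taylor ε p
    have hq : q.natDegree = p.natDegree := natDegree_taylor p ε
    have hpos : ∀ j ≤ q.natDegree, 0 < q.coeff j := fun j hj => by
      rw [hq] at hj
      rw [taylor_coeff]
      refine eval_pos_of_coeff_nonneg (k := p.natDegree - j)
        (fun i => by rw [hasseDeriv_coeff]; exact mul_nonneg (Nat.cast_nonneg _) (hnn _)) ?_ hε
      rw [hasseDeriv_coeff, Nat.sub_add_cancel hj]
      exact mul_pos (Nat.cast_pos.mpr (Nat.choose_pos hj)) hlead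
    have := (hp.taylor ε).le_coeff_of_coeff_pos (r := r) (c := c) hpos (hq ▸ hr) fun t ht => by
      rw [taylor_eval]
      exact (hc t ht).trans (eval_le_eval_of_coeff_nonneg hnn ht.le (by linarith))
    rwa [hq, taylor_coeff] at this
  have hlim : Tendsto (fun ε => (hasseDeriv r p).eval ε) (𝓝[>] 0) (𝓝 (p.coeff r)) := by
    have := ((hasseDeriv r p).continuous.tendsto 0).mono_left
      (nhdsWithin_le_nhds (s := Set.Ioi 0))
    rwa [← taylor_coeff, taylor_zero] at this
  exact ge_of_tendsto hlim (eventually_nhdsWithin_of_forall hshift)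

theorem norm_eval_le_two_pow_mul_norm_eval {g : ℂ[X]} {z₀ z : ℂ} {δ : ℝ}
    (hg : ∀ w ∈ Metric.closedBall z₀ δ, g.eval w ≠ 0) (hz : z ∈ Metric.closedBall z₀ δ) :
    ‖g.eval z‖ ≤ 2 ^ g.natDegree * ‖g.eval z₀‖ := by
  have hsplit := IsAlgClosed.splits g
  have hfar : ∀ a ∈ g.roots, ‖z - a‖ ≤ 2 * ‖z₀ - a‖ := fun a ha => by
    have ha' : δ < ‖z₀ - a‖ := by
      by_contra! h
      exact hg a (by rwa [Metric.mem_closedBall, dist_comm, dist_eq_norm]) (mem_roots'.mp ha).2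
    have := norm_sub_le_norm_sub_add_norm_sub z z₀ a
    rw [Metric.mem_closedBall, dist_eq_norm] at hz
    linarith
  have hnorm (w : ℂ) : ‖(g.roots.map (w - ·)).prod‖ = (g.roots.map (‖w - ·‖)).prod :=
    (Multiset.prod_hom' _ (normHom : ℂ →*₀ ℝ) _).symm
  rw [hsplit.eval_eq_prod_roots, hsplit.eval_eq_prod_roots, hsplit.natDegree_eq_card_roots,
    norm_mul, norm_mul, hnorm, hnorm]
  calc ‖g.leadingCoeff‖ * (g.roots.map fun a => ‖z - a‖).prod
      ≤ ‖g.leadingCoeff‖ * (g.roots.map fun a => 2 * ‖z₀ - a‖).prod := by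
        gcongr
        exact Multiset.prod_map_le_prod_map₀ _ _ (fun _ _ => norm_nonneg _) hfar
    _ = 2 ^ g.roots.card * (‖g.leadingCoeff‖ * (g.roots.map fun a => ‖z₀ - a‖).prod) := by
        rw [Multiset.prod_map_mul, Multiset.map_const', Multiset.prod_replicate]; ring

theorem eq_zero_of_tendsto_eval {ι : Type*} {l : Filter ι} [l.NeBot] {G : ι → ℂ[X]}
    {f : ℂ[X]} {D : ℕ} {z₀ : ℂ} {δ : ℝ} (hδ : 0 < δ) (hdeg : ∀ i, (G i).natDegree ≤ D)
    (hG : ∀ᶠ i in l, ∀ w ∈ Metric.closedBall z₀ δ, (G i).eval w ≠ 0)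
    (hlim : ∀ w, Tendsto (fun i => (G i).eval w) l (𝓝 (f.eval w))) (hf : f.eval z₀ = 0) :
    f = 0 := by
  have hvanish : ∀ z ∈ Metric.closedBall z₀ δ, f.eval z = 0 := fun z hz => by
    have hbound : ∀ᶠ i in l, ‖(G i).eval z‖ ≤ 2 ^ D * ‖(G i).eval z₀‖ := hG.mono fun i hi =>
      (norm_eval_le_two_pow_mul_norm_eval hi hz).trans (by gcongr; exacts [one_le_two, hdeg i])
    have := le_of_tendsto_of_tendsto (hlim z).norm ((hlim z₀).norm.const_mul _) hbound
    rwa [hf, norm_zero, mul_zero, norm_le_zero_iff] at this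
  exact eq_zero_of_infinite_isRoot f
    ((infinite_of_mem_nhds z₀ (Metric.closedBall_mem_nhds z₀ hδ)).mono hvanish)

theorem splits_of_forall_aeval_ne_zero {p : ℝ[X]}
    (h : ∀ z : ℂ, 0 < z.im → aeval z p ≠ 0) : p.Splits := by
  refine Splits.of_splits_map_of_injective (algebraMap ℝ ℂ).injective (IsAlgClosed.splits _)
    fun z hz => ?_
  have hroot : aeval z p = 0 := by rw [← eval_map_algebraMap]; exact (mem_roots'.mp hz).2
  have him : z.im = 0 := by
    rcases lt_trichotomy z.im 0 with hneg | h0 | hpos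
    · refine absurd ?_ (h (Complex.conjAe z) (by simpa using hneg))
      rw [aeval_algHom_apply, hroot, map_zero]
    · exact h0
    · exact absurd hroot (h z hpos)
  exact ⟨z.re, Complex.ext (by simp) (by simp [him])⟩

end Polynomial

namespace MvPolynomial

theorem eval_map_eval₂Hom_finSuccEquiv {R S : Type*} [CommSemiring R] [CommSemiring S] {n : ℕ}
    (φ : R →+* S) (y : Fin n → S) (z : S) (P : MvPolynomial (Fin (n + 1)) R) :
    ((finSuccEquiv R n P).map (eval₂Hom φ y)).eval z = eval₂ φ (Fin.cons z y) P := by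
  induction P using MvPolynomial.induction_on with
  | C a => simp [finSuccEquiv_apply]
  | add p q hp hq => simp [hp, hq]
  | mul_X p i ih =>
    refine Fin.cases ?_ (fun j => ?_) i <;> simp [ih, finSuccEquiv_X_zero, finSuccEquiv_X_succ]

variable {σ : Type*} {P : MvPolynomial σ ℝ} {x : σ → ℝ}

theorem eval_nonneg_of_coeff_nonneg (hP : ∀ m, 0 ≤ P.coeff m) (hx : ∀ i, 0 ≤ x i) :
    0 ≤ eval x P := by
  rw [eval_eq]
  exact Finset.sum_nonneg fun m _ =>
    mul_nonneg (hP m) (Finset.prod_nonneg fun i _ => pow_nonneg (hx i) _)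

theorem eval_pos_of_coeff_nonneg (hP0 : P ≠ 0) (hP : ∀ m, 0 ≤ P.coeff m) (hx : ∀ i, 0 < x i) :
    0 < eval x P := by
  rw [eval_eq]
  refine Finset.sum_pos (fun m hm => mul_pos ((hP m).lt_of_ne' (mem_support_iff.mp hm))
    (Finset.prod_pos fun i _ => pow_pos (hx i) _)) (support_nonempty.mpr hP0)

theorem natDegree_map_eval_of_coeff_nonneg {F : (MvPolynomial σ ℝ)[X]}
    (hF : ∀ i m, 0 ≤ (F.coeff i).coeff m) (hx : ∀ i, 0 < x i) :
    (F.map (eval x)).natDegree = F.natDegree := by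
  rcases eq_or_ne F 0 with rfl | hF0
  · simp
  exact natDegree_map_of_leadingCoeff_ne_zero _
    (eval_pos_of_coeff_nonneg (leadingCoeff_ne_zero.mpr hF0) (hF _) hx).ne'

theorem splits_map_eval_finSuccEquiv {n : ℕ} {P : MvPolynomial (Fin (n + 1)) ℝ}
    (hP : ∀ z : Fin (n + 1) → ℂ, (∀ i, 0 < (z i).im) → aeval z P ≠ 0) (x : Fin n → ℝ) :
    ((finSuccEquiv ℝ n P).map (eval x)).Splits := by
  set p := (finSuccEquiv ℝ n P).map (eval x)
  rcases eq_or_ne p 0 with hp | hp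
  · rw [hp]; exact Splits.zero
  refine splits_of_forall_aeval_ne_zero fun z₀ hz₀ hroot => hp ?_
  let y : ℝ → Fin n → ℂ := fun ε i => x i + ε * Complex.I
  let G : ℝ → ℂ[X] := fun ε => (finSuccEquiv ℝ n P).map (eval₂Hom (algebraMap ℝ ℂ) (y ε))
  have hG (ε : ℝ) (w : ℂ) : (G ε).eval w = aeval (Fin.cons w (y ε) : Fin (n + 1) → ℂ) P :=
    eval_map_eval₂Hom_finSuccEquiv _ _ _ _
  have hG0 : G 0 = p.map (algebraMap ℝ ℂ) := by
    simp only [G, p, Polynomial.map_map]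
    congr 1
    exact ringHom_ext (fun a => by simp) (fun i => by simp [y])
  rw [← Polynomial.map_eq_zero_iff (algebraMap ℝ ℂ).injective, ← hG0]
  refine eq_zero_of_tendsto_eval (l := 𝓝[>] (0 : ℝ)) (G := G) (half_pos hz₀)
    (fun _ => natDegree_map_le) ?_ (fun w => ?_) (by rwa [hG0, eval_map_algebraMap])
  · filter_upwards [self_mem_nhdsWithin] with ε hε w hw
    rw [hG]
    refine hP _ (Fin.cases ?_ fun i => by simpa [y] using hε)
    have := (Complex.abs_im_le_norm (w - z₀)).trans (mem_closedBall_iff_norm.mp hw)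
    rw [Complex.sub_im, abs_le] at this
    simp only [Fin.cons_zero]
    linarith
  · simp only [hG]
    refine (Continuous.tendsto ?_ 0).mono_left nhdsWithin_le_nhds
    have hpt : Continuous fun ε : ℝ => (Fin.cons w (y ε) : Fin (n + 1) → ℂ) :=
      continuous_pi fun i => Fin.cases (by simpa using continuous_const) (fun j => by
        simp only [Fin.cons_succ, y]; fun_prop) i
    refine ((continuous_eval (P.map (algebraMap ℝ ℂ))).comp hpt).congr fun ε => ?_
    simp [eval_map, aeval_def]

theorem iInf_mul_pow_le_eval_map_finSuccEquiv {n : ℕ} {P : MvPolynomial (Fin (n + 1)) ℝ}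
    (hP : ∀ m, 0 ≤ P.coeff m) {α : Fin (n + 1) → ℝ} {r : ℕ} (hα0 : α 0 = r) {x : Fin n → ℝ}
    (hx : ∀ i, 0 < x i) {t : ℝ} (ht : 0 < t) :
    ((⨅ y : {y : Fin (n + 1) → ℝ // ∀ i, 0 < y i}, eval y.1 P / ∏ i, y.1 i ^ α i) *
      ∏ i, x i ^ α i.succ) * t ^ r ≤ ((finSuccEquiv ℝ n P).map (eval x)).eval t := by
  have hbdd : BddBelow (Set.range fun y : {y : Fin (n + 1) → ℝ // ∀ i, 0 < y i} =>
      eval y.1 P / ∏ i, y.1 i ^ α i) := ⟨0, by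
    rintro _ ⟨y, rfl⟩
    exact div_nonneg (eval_nonneg_of_coeff_nonneg hP fun i => (y.2 i).le)
      (Finset.prod_nonneg fun i _ => Real.rpow_nonneg (y.2 i).le _)⟩
  have hprod :
      ∏ i, (Fin.cons t x : Fin (n + 1) → ℝ) i ^ α i = t ^ r * ∏ i, x i ^ α i.succ := by
    simp [Fin.prod_univ_succ, hα0]
  have := ciInf_le hbdd ⟨Fin.cons t x, Fin.cases ht hx⟩
  rw [hprod, le_div_iff₀ (mul_pos (pow_pos ht r)
    (Finset.prod_pos fun i _ => Real.rpow_pos_of_pos (hx i) _))] at this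
  rw [← eval_eq_eval_mv_eval']
  linarith

end MvPolynomial

theorem stmt_10_general (n : ℕ) (P : MvPolynomial (Fin (n + 1)) ℝ)
    (hstable : ∀ z : Fin (n + 1) → ℂ, (∀ i, 0 < (z i).im) → MvPolynomial.aeval z P ≠ 0)
    (hcoeff : ∀ m, 0 ≤ P.coeff m)
    (d r : ℕ) (hd : (MvPolynomial.finSuccEquiv ℝ n P).natDegree = d) (hr : r ≤ d)
    (α : Fin (n + 1) → ℝ) (hα0 : α 0 = (r : ℝ)) :
    (d.choose r : ℝ) * ((r : ℝ) / d) ^ r * (((d - r : ℕ) : ℝ) / d) ^ (d - r) *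
        (⨅ x : {x : Fin (n + 1) → ℝ // ∀ i, 0 < x i},
          MvPolynomial.eval x.1 P / ∏ i, (x.1 i) ^ (α i))
      ≤ ⨅ x : {x : Fin n → ℝ // ∀ i, 0 < x i},
          MvPolynomial.eval x.1 ((MvPolynomial.finSuccEquiv ℝ n P).coeff r) /
            ∏ i, (x.1 i) ^ (α i.succ) := by
  set F := MvPolynomial.finSuccEquiv ℝ n P
  have hF : ∀ i m, 0 ≤ (F.coeff i).coeff m := fun i m => by
    rw [MvPolynomial.finSuccEquiv_coeff_coeff]; exact hcoeff _
  have : Nonempty {x : Fin n → ℝ // ∀ i, 0 < x i} := ⟨⟨fun _ => 1, fun _ => one_pos⟩⟩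
  refine le_ciInf fun x => ?_
  have hdeg : (F.map (MvPolynomial.eval x.1)).natDegree = d :=
    hd ▸ MvPolynomial.natDegree_map_eval_of_coeff_nonneg hF x.2
  have := (MvPolynomial.splits_map_eval_finSuccEquiv hstable x.1).le_coeff_of_coeff_nonneg
    (fun i => by
      rw [coeff_map]; exact MvPolynomial.eval_nonneg_of_coeff_nonneg (hF i) fun j => (x.2 j).le)
    (hdeg ▸ hr) fun _ ht => MvPolynomial.iInf_mul_pow_le_eval_map_finSuccEquiv hcoeff hα0 x.2 ht
  rw [hdeg, coeff_map, ← mul_assoc] at this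
  rwa [le_div_iff₀ (Finset.prod_pos fun i _ => Real.rpow_pos_of_pos (x.2 i) _)]

/-- Capacity preservation under taking a coefficient in the first variable of
a real stable polynomial with nonnegative coefficients. -/
theorem stmt_10 (n : ℕ) (P : MvPolynomial (Fin (n + 1)) ℝ)
    (hstable : ∀ z : Fin (n + 1) → ℂ, (∀ i, 0 < (z i).im) → MvPolynomial.aeval z P ≠ 0)
    (hcoeff : ∀ m, 0 ≤ P.coeff m)
    (d r : ℕ) (hd : (MvPolynomial.finSuccEquiv ℝ n P).natDegree = d) (hr : r ≤ d)
    (α : Fin (n + 1) → ℝ) (hα : ∀ i, 0 ≤ α i) (hα0 : α 0 = (r : ℝ)) :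
    (d.choose r : ℝ) * ((r : ℝ) / d) ^ r * (((d - r : ℕ) : ℝ) / d) ^ (d - r) *
        (⨅ x : {x : Fin (n + 1) → ℝ // ∀ i, 0 < x i},
          MvPolynomial.eval x.1 P / ∏ i, (x.1 i) ^ (α i))
      ≤ ⨅ x : {x : Fin n → ℝ // ∀ i, 0 < x i},
          MvPolynomial.eval x.1 ((MvPolynomial.finSuccEquiv ℝ n P).coeff r) /
            ∏ i, (x.1 i) ^ (α i.succ) :=
  stmt_10_general n P hstable hcoeff d r hd hr α hα0
end
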